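/- Let μ be a probability measure on ℝ^d with finite second moment. Suppose (z₁, …, z_K) ∈ (ℝ^d)^K is a global minimizer of F(z₁,…,z_K) = ∫ min_{k=1,…,K} ‖x − z_k‖² dμ(x), and assume the Voronoi tie sets are μ-null and that each open Voronoi cell A_k = {x : ‖x − z_k‖ < ‖x − z_r‖ ∀ r ≠ k} has μ(A_k) > 0. Then for every k, z_k = (∫_{A_k} x dμ(x)) / μ(A_k), i.e., each point equals the conditional mean of μ restricted to its own Voronoi cell (the tessellation is centroidal). -/

import Mathlib

open MeasureTheory

section Aux

open RealInnerProductSpace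

variable {d K : ℕ}

private lemma integrable_normsq (μ : Measure (EuclideanSpace ℝ (Fin d)))
    [IsProbabilityMeasure μ] (hmom : Integrable (fun x => ‖x‖ ^ 2) μ)
    (v : EuclideanSpace ℝ (Fin d)) : Integrable (fun x => ‖x - v‖ ^ 2) μ := by
  refine Integrable.mono' ((hmom.const_mul 2).add (integrable_const (2 * ‖v‖^2)))
    (Continuous.aestronglyMeasurable (by continuity)) (Filter.Eventually.of_forall fun x => ?_)
  simp only [Pi.add_apply]
  rw [Real.norm_eq_abs, abs_of_nonneg (by positivity)]
  nlinarith [pow_le_pow_left₀ (norm_nonneg (x - v)) (norm_sub_le x v) 2, sq_nonneg (‖x‖ - ‖v‖)]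

private lemma inf_attained (hK : 0 < K) (f : Fin K → ℝ) : ∃ j, (∀ i, f j ≤ f i) ∧ f j = ⨅ i, f i := by
  have : Nonempty (Fin K) := ⟨⟨0, hK⟩⟩
  obtain ⟨j, hj⟩ := Finite.exists_min f
  exact ⟨j, hj, le_antisymm (le_ciInf hj) (ciInf_le (Set.Finite.bddBelow (Set.finite_range f)) j)⟩

private lemma integrable_inf (hK : 0 < K) (μ : Measure (EuclideanSpace ℝ (Fin d)))
    [IsProbabilityMeasure μ] (hmom : Integrable (fun x => ‖x‖ ^ 2) μ)
    (w : Fin K → EuclideanSpace ℝ (Fin d)) :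
    Integrable (fun x => ⨅ k : Fin K, ‖x - w k‖ ^ 2) μ := by
  have : Nonempty (Fin K) := ⟨⟨0, hK⟩⟩
  refine Integrable.mono' (integrable_normsq μ hmom (w ⟨0, hK⟩))
    (Measurable.aestronglyMeasurable (Measurable.iInf fun k => by fun_prop))
    (Filter.Eventually.of_forall fun x => ?_)
  rw [Real.norm_eq_abs, abs_of_nonneg (le_ciInf fun k => by positivity)]
  exact ciInf_le (Set.Finite.bddBelow (Set.finite_range _)) _

private lemma expand_integral (μ : Measure (EuclideanSpace ℝ (Fin d))) [IsProbabilityMeasure μ]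
    (s : Set (EuclideanSpace ℝ (Fin d)))
    (h1 : IntegrableOn (fun x => ‖x‖ ^ 2) s μ)
    (h2 : IntegrableOn (fun x : EuclideanSpace ℝ (Fin d) => x) s μ)
    (v : EuclideanSpace ℝ (Fin d)) :
    ∫ x in s, ‖x - v‖ ^ 2 ∂μ
      = (∫ x in s, ‖x‖ ^ 2 ∂μ) - 2 * ⟪v, ∫ x in s, x ∂μ⟫ + (μ s).toReal * ‖v‖ ^ 2 := by
  have hi : IntegrableOn (fun x : EuclideanSpace ℝ (Fin d) => ⟪v, x⟫) s μ := h2.const_inner v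
  have hsub : Integrable (fun x : EuclideanSpace ℝ (Fin d) => ‖x‖ ^ 2 - 2 * ⟪v, x⟫)
      (μ.restrict s) := h1.sub (hi.const_mul 2)
  calc ∫ x in s, ‖x - v‖ ^ 2 ∂μ
      = ∫ x in s, (‖x‖ ^ 2 - 2 * ⟪v, x⟫ + ‖v‖ ^ 2) ∂μ := by
        congr 1; funext x
        rw [norm_sub_sq_real, real_inner_comm]
    _ = (∫ x in s, ‖x‖ ^ 2 ∂μ) - 2 * ⟪v, ∫ x in s, x ∂μ⟫ + (μ s).toReal * ‖v‖ ^ 2 := by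
        rw [integral_add hsub (integrable_const _), integral_sub h1 (hi.const_mul 2),
          integral_const, integral_const_mul, integral_inner h2, smul_eq_mul, mul_comm]
        simp [Measure.restrict_apply_univ, measureReal_def]

end Aux

/-- Centroidal property of optimal quantizers: if `(z₁,…,z_K)` globally minimizes the
quantization distortion `F(w) = ∫ min_k ‖x − w_k‖² dμ`, the Voronoi tie set is
`μ`-null, and each open Voronoi cell has positive mass, then each `z_k` is the
conditional mean of `μ` restricted to its own Voronoi cell. -/
theorem optimal_quantizer_is_centroidal {d K : ℕ} (hK : 0 < K)
    (μ : Measure (EuclideanSpace ℝ (Fin d))) [IsProbabilityMeasure μ]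
    (hmom : Integrable (fun x => ‖x‖ ^ 2) μ)
    (z : Fin K → EuclideanSpace ℝ (Fin d))
    (hopt : ∀ w : Fin K → EuclideanSpace ℝ (Fin d),
      (∫ x, (⨅ k : Fin K, ‖x - z k‖ ^ 2) ∂μ) ≤ ∫ x, (⨅ k : Fin K, ‖x - w k‖ ^ 2) ∂μ)
    (hties : μ {x : EuclideanSpace ℝ (Fin d) |
      ∃ k r : Fin K, k ≠ r ∧ ‖x - z k‖ = ‖x - z r‖ ∧
        ‖x - z k‖ ≤ ⨅ j : Fin K, ‖x - z j‖} = 0)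
    (A : Fin K → Set (EuclideanSpace ℝ (Fin d)))
    (hA : ∀ k, A k = {x : EuclideanSpace ℝ (Fin d) |
      ∀ r : Fin K, r ≠ k → ‖x - z k‖ < ‖x - z r‖})
    (hpos : ∀ k, 0 < μ (A k)) :
    ∀ k : Fin K, z k = ((μ (A k)).toReal)⁻¹ • ∫ x in A k, x ∂μ := by
  have hne : Nonempty (Fin K) := ⟨⟨0, hK⟩⟩
  intro k
  set s := A k with hs_def
  -- measurability of the cell
  have hs : MeasurableSet s := by
    rw [hs_def, hA k]
    have : {x : EuclideanSpace ℝ (Fin d) | ∀ r : Fin K, r ≠ k → ‖x - z k‖ < ‖x - z r‖}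
        = ⋂ r : Fin K, {x | r ≠ k → ‖x - z k‖ < ‖x - z r‖} := by
      ext x; simp [Set.mem_iInter]
    rw [this]
    refine MeasurableSet.iInter fun r => ?_
    by_cases hr : r = k
    · simp [hr]
    · have : {x : EuclideanSpace ℝ (Fin d) | r ≠ k → ‖x - z k‖ < ‖x - z r‖}
          = {x | ‖x - z k‖ < ‖x - z r‖} := by ext x; simp [hr]
      rw [this]
      exact measurableSet_lt (by fun_prop) (by fun_prop)
  -- integrability facts
  have hint_z := integrable_inf hK μ hmom z
  have hint_sq : ∀ v, Integrable (fun x => ‖x - v‖ ^ 2) μ := integrable_normsq μ hmom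
  have hint_id : Integrable (fun x : EuclideanSpace ℝ (Fin d) => x) μ := by
    refine Integrable.mono' ((integrable_const (1:ℝ)).add hmom)
      (Continuous.aestronglyMeasurable continuous_id) (Filter.Eventually.of_forall fun x => ?_)
    simp only [Pi.add_apply]
    nlinarith [norm_nonneg x, sq_nonneg (‖x‖ - 1)]
  -- key inequality: z k minimizes v ↦ ∫ over s of ‖x - v‖²
  have hkey : ∀ v : EuclideanSpace ℝ (Fin d),
      ∫ x in s, ‖x - z k‖ ^ 2 ∂μ ≤ ∫ x in s, ‖x - v‖ ^ 2 ∂μ := by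
    intro v
    set w : Fin K → EuclideanSpace ℝ (Fin d) := Function.update z k v with hw_def
    have hint_w := integrable_inf hK μ hmom w
    have hsplit_z := (integral_add_compl hs hint_z).symm
    have hsplit_w := (integral_add_compl hs hint_w).symm
    -- on s, inf over z equals ‖x - z k‖²
    have h_on_s : ∫ x in s, (⨅ j : Fin K, ‖x - z j‖ ^ 2) ∂μ = ∫ x in s, ‖x - z k‖ ^ 2 ∂μ := by
      refine setIntegral_congr_fun hs fun x hx => ?_
      rw [hs_def, hA k] at hx
      refine le_antisymm (ciInf_le (Set.Finite.bddBelow (Set.finite_range _)) k)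
        (le_ciInf fun j => ?_)
      by_cases hj : j = k
      · simp [hj]
      · exact pow_le_pow_left₀ (norm_nonneg _) (le_of_lt (hx j hj)) 2
    -- on s, inf over w is at most ‖x - v‖²
    have h_w_s : ∫ x in s, (⨅ j : Fin K, ‖x - w j‖ ^ 2) ∂μ ≤ ∫ x in s, ‖x - v‖ ^ 2 ∂μ := by
      refine setIntegral_mono_on hint_w.integrableOn (hint_sq v).integrableOn hs fun x _ => ?_
      have := ciInf_le (Set.Finite.bddBelow
        (Set.finite_range fun j : Fin K => ‖x - w j‖ ^ 2)) k
      simpa [hw_def, Function.update_self] using this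
    -- on sᶜ, a.e., inf over w ≤ inf over z
    have h_w_sc : ∫ x in sᶜ, (⨅ j : Fin K, ‖x - w j‖ ^ 2) ∂μ
        ≤ ∫ x in sᶜ, (⨅ j : Fin K, ‖x - z j‖ ^ 2) ∂μ := by
      refine setIntegral_mono_on_ae hint_w.integrableOn hint_z.integrableOn hs.compl ?_
      have hT : ∀ᵐ x ∂μ, x ∉ {x : EuclideanSpace ℝ (Fin d) |
          ∃ k r : Fin K, k ≠ r ∧ ‖x - z k‖ = ‖x - z r‖ ∧
            ‖x - z k‖ ≤ ⨅ j : Fin K, ‖x - z j‖} :=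
        (ae_iff).mpr (by simpa using hties)
      filter_upwards [hT] with x hxT hxs
      obtain ⟨j₀, hj₀min, hj₀eq⟩ := inf_attained hK (fun j => ‖x - z j‖)
      rw [hs_def, hA k] at hxs
      simp only [Set.mem_compl_iff, Set.mem_setOf_eq, not_forall, Classical.not_imp, not_lt] at hxs
      obtain ⟨r, hr, hle⟩ := hxs
      have hj₀k : j₀ ≠ k := by
        intro h
        exact hxT ⟨k, r, Ne.symm hr, le_antisymm (h ▸ hj₀min r) hle, le_of_eq (h ▸ hj₀eq)⟩
      have h1 : ⨅ j : Fin K, ‖x - w j‖ ^ 2 ≤ ‖x - w j₀‖ ^ 2 :=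
        ciInf_le (Set.Finite.bddBelow (Set.finite_range _)) j₀
      have h2 : w j₀ = z j₀ := Function.update_of_ne hj₀k v z
      have h3 : ‖x - z j₀‖ ^ 2 ≤ ⨅ j : Fin K, ‖x - z j‖ ^ 2 :=
        le_ciInf fun j => pow_le_pow_left₀ (norm_nonneg _) (hj₀min j) 2
      calc ⨅ j : Fin K, ‖x - w j‖ ^ 2 ≤ ‖x - z j₀‖ ^ 2 := by rwa [h2] at h1
        _ ≤ _ := h3
    have hopt' := hopt w
    rw [hsplit_z, hsplit_w, h_on_s] at hopt'
    linarith
  -- barycenter argument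
  have hfin : μ s ≠ ⊤ := measure_ne_top μ s
  set c : ℝ := (μ s).toReal with hc_def
  have hc : 0 < c := ENNReal.toReal_pos (ne_of_gt (hpos k)) hfin
  set m : EuclideanSpace ℝ (Fin d) := ∫ x in s, x ∂μ with hm_def
  set b : EuclideanSpace ℝ (Fin d) := c⁻¹ • m with hb_def
  have hmb : m = c • b := by rw [hb_def, smul_smul, mul_inv_cancel₀ (ne_of_gt hc), one_smul]
  have h1 : IntegrableOn (fun x : EuclideanSpace ℝ (Fin d) => ‖x‖ ^ 2) s μ := hmom.integrableOn
  have h2 : IntegrableOn (fun x : EuclideanSpace ℝ (Fin d) => x) s μ := hint_id.integrableOn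
  have hZ := expand_integral μ s h1 h2 (z k)
  have hB := expand_integral μ s h1 h2 b
  have hineq := hkey b
  rw [hZ, hB, ← hm_def, ← hc_def] at hineq
  have e1 : (inner ℝ (z k) m : ℝ) = c * inner ℝ (z k) b := by
    rw [hmb, real_inner_smul_right]
  have e2 : (inner ℝ b m : ℝ) = c * ‖b‖ ^ 2 := by
    rw [hmb, real_inner_smul_right, real_inner_self_eq_norm_sq]
  have hexp : ‖z k - b‖ ^ 2 = ‖z k‖ ^ 2 - 2 * inner ℝ (z k) b + ‖b‖ ^ 2 :=
    norm_sub_sq_real (z k) b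
  have hcx : c * (‖z k‖ ^ 2 - 2 * inner ℝ (z k) b + ‖b‖ ^ 2) ≤ 0 := by
    nlinarith [hineq, e1, e2]
  have hzb : ‖z k - b‖ ^ 2 ≤ 0 := by
    rw [hexp]
    exact le_of_mul_le_mul_left (by rw [mul_zero]; exact hcx) hc
  have hz0 : z k - b = 0 := by
    rw [← norm_eq_zero]
    nlinarith [norm_nonneg (z k - b)]
  rw [sub_eq_zero] at hz0
  rw [hz0, hb_def, hc_def, hm_def, hs_def]
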